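/- arXiv:2603.26369 — 5 statements merged into one kernel-verified Lean document; each statement's English description precedes it below -/
import Mathlib

section
/- Let M, N ≥ 1, let C ∈ ℝ^{M×N} and ψ ∈ ℝ^N with Cψ ≠ 0, and define the partial-trace deviation measure D_ψ(C) = ‖C‖_F² − ‖CᵀCψ‖²/‖Cψ‖². Then: (i) D_ψ(C) equals the minimum over c₂ ∈ ℝ^N of ‖C − (Cψ)c₂ᵀ‖_F², so in particular D_ψ(C) ≥ 0; and (ii) D_ψ(C) = 0 if and only if C is separable, i.e. there exist vectors η₁ ∈ ℝ^M and η₂ ∈ ℝ^N with C = η₁η₂ᵀ. -/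
/-! Expanding `‖C - v cᵀ‖_F²` as a quadratic in `c` and completing the square gives
`‖C - v cᵀ‖_F² = D + ‖v‖² ‖c - Cᵀv / ‖v‖²‖²`, so for `v = Cψ` the deviation `D = D_ψ(C)` is the
minimum, attained at `c = Cᵀv / ‖v‖²`. Hence `D = 0` iff `C = v cᵀ` for some `c`; conversely a
rank-one `C = η₁η₂ᵀ` has `Cψ = ⟨η₂, ψ⟩ η₁` with `⟨η₂, ψ⟩ ≠ 0`, so `C = (Cψ)(η₂ / ⟨η₂, ψ⟩)ᵀ`. -/

open scoped BigOperators
open Matrix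

noncomputable section

/-- Squared Frobenius norm of a real matrix: `‖A‖_F² = ∑ᵢⱼ A i j ^ 2`. -/
def frobSq {M N : ℕ} (A : Matrix (Fin M) (Fin N) ℝ) : ℝ := ∑ i, ∑ j, A i j ^ 2

/-- Squared Euclidean norm of a vector. -/
def vnormSq {n : ℕ} (x : Fin n → ℝ) : ℝ := ∑ i, x i ^ 2

section

variable {M N : ℕ}

theorem vnormSq_eq_dotProduct (x : Fin N → ℝ) : vnormSq x = x ⬝ᵥ x := by
  simp only [vnormSq, dotProduct, sq]

theorem vnormSq_nonneg (x : Fin N → ℝ) : 0 ≤ vnormSq x :=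
  Finset.sum_nonneg fun i _ => sq_nonneg (x i)

theorem vnormSq_eq_zero_iff {x : Fin N → ℝ} : vnormSq x = 0 ↔ x = 0 := by
  rw [vnormSq_eq_dotProduct, dotProduct_self_eq_zero]

theorem frobSq_eq_sum_vnormSq (A : Matrix (Fin M) (Fin N) ℝ) : frobSq A = ∑ i, vnormSq (A i) :=
  rfl

theorem frobSq_nonneg (A : Matrix (Fin M) (Fin N) ℝ) : 0 ≤ frobSq A :=
  Finset.sum_nonneg fun i _ => vnormSq_nonneg (A i)

theorem frobSq_eq_zero_iff {A : Matrix (Fin M) (Fin N) ℝ} : frobSq A = 0 ↔ A = 0 := by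
  rw [frobSq_eq_sum_vnormSq, Finset.sum_eq_zero_iff_of_nonneg fun i _ => vnormSq_nonneg (A i)]
  simp only [Finset.mem_univ, true_implies, vnormSq_eq_zero_iff]
  exact ⟨fun h => funext h, fun h i => congrFun h i⟩

theorem vnormSq_sub_smul (x y : Fin N → ℝ) (t : ℝ) :
    vnormSq (x - t • y) = vnormSq x - 2 * t * (x ⬝ᵥ y) + t ^ 2 * vnormSq y := by
  simp only [vnormSq_eq_dotProduct, sub_dotProduct, dotProduct_sub, smul_dotProduct,
    dotProduct_smul, dotProduct_comm y x, smul_eq_mul]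
  ring

theorem frobSq_sub_vecMulVec (C : Matrix (Fin M) (Fin N) ℝ) (v : Fin M → ℝ) (c : Fin N → ℝ) :
    frobSq (C - vecMulVec v c) = frobSq C - 2 * (c ⬝ᵥ Cᵀ *ᵥ v) + vnormSq v * vnormSq c := by
  have hrow : ∀ i, (C - vecMulVec v c) i = C i - v i • c := fun i => by
    ext j; simp [vecMulVec_apply]
  have hcross : c ⬝ᵥ Cᵀ *ᵥ v = ∑ i, v i * (C i ⬝ᵥ c) := by
    rw [mulVec_transpose, dotProduct_comm, ← dotProduct_mulVec]; rfl
  have hsq : vnormSq v * vnormSq c = ∑ i, v i ^ 2 * vnormSq c := Finset.sum_mul ..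
  simp only [frobSq_eq_sum_vnormSq, hrow, vnormSq_sub_smul, Finset.sum_add_distrib,
    Finset.sum_sub_distrib, hcross, Finset.mul_sum, hsq]
  congr 2
  exact Finset.sum_congr rfl fun i _ => by ring

theorem frobSq_sub_vecMulVec_eq (C : Matrix (Fin M) (Fin N) ℝ) {v : Fin M → ℝ} (hv : v ≠ 0)
    (c : Fin N → ℝ) :
    frobSq (C - vecMulVec v c) = frobSq C - vnormSq (Cᵀ *ᵥ v) / vnormSq v
      + vnormSq v * vnormSq (c - (vnormSq v)⁻¹ • Cᵀ *ᵥ v) := by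
  have ha : vnormSq v ≠ 0 := vnormSq_eq_zero_iff.not.mpr hv
  rw [frobSq_sub_vecMulVec, vnormSq_sub_smul]
  field_simp
  ring

theorem isLeast_frobSq_sub_vecMulVec (C : Matrix (Fin M) (Fin N) ℝ) {v : Fin M → ℝ} (hv : v ≠ 0) :
    IsLeast {r : ℝ | ∃ c : Fin N → ℝ, r = frobSq (C - vecMulVec v c)}
      (frobSq C - vnormSq (Cᵀ *ᵥ v) / vnormSq v) := by
  refine ⟨⟨(vnormSq v)⁻¹ • Cᵀ *ᵥ v, ?_⟩, ?_⟩
  · rw [frobSq_sub_vecMulVec_eq C hv, sub_self, vnormSq_eq_zero_iff.mpr rfl, mul_zero, add_zero]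
  · rintro _ ⟨c, rfl⟩
    rw [frobSq_sub_vecMulVec_eq C hv]
    exact le_add_of_nonneg_right (mul_nonneg (vnormSq_nonneg v) (vnormSq_nonneg _))

theorem frobSq_sub_div_vnormSq_eq_zero_iff (C : Matrix (Fin M) (Fin N) ℝ) {v : Fin M → ℝ}
    (hv : v ≠ 0) :
    frobSq C - vnormSq (Cᵀ *ᵥ v) / vnormSq v = 0 ↔ ∃ c : Fin N → ℝ, C = vecMulVec v c := by
  obtain ⟨⟨c₀, hc₀⟩, hle⟩ := isLeast_frobSq_sub_vecMulVec C hv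
  constructor
  · intro h
    exact ⟨c₀, sub_eq_zero.mp (frobSq_eq_zero_iff.mp (by rw [← hc₀, h]))⟩
  · rintro ⟨c, hc⟩
    refine le_antisymm (hle ⟨c, ?_⟩) (hc₀ ▸ frobSq_nonneg _)
    rw [← hc, sub_self, frobSq_eq_zero_iff.mpr rfl]

theorem exists_eq_vecMulVec_mulVec_iff {C : Matrix (Fin M) (Fin N) ℝ} {ψ : Fin N → ℝ}
    (hψ : C *ᵥ ψ ≠ 0) :
    (∃ c : Fin N → ℝ, C = vecMulVec (C *ᵥ ψ) c) ↔
      ∃ (η₁ : Fin M → ℝ) (η₂ : Fin N → ℝ), C = vecMulVec η₁ η₂ := by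
  refine ⟨fun ⟨c, hc⟩ => ⟨_, c, hc⟩, ?_⟩
  rintro ⟨η₁, η₂, rfl⟩
  have hmul : vecMulVec η₁ η₂ *ᵥ ψ = (η₂ ⬝ᵥ ψ) • η₁ := by
    rw [vecMulVec_mulVec, op_smul_eq_smul]
  have ht : η₂ ⬝ᵥ ψ ≠ 0 := fun h => hψ (by rw [hmul, h, zero_smul])
  refine ⟨(η₂ ⬝ᵥ ψ)⁻¹ • η₂, ?_⟩
  rw [hmul, smul_vecMulVec, vecMulVec_smul, smul_smul, mul_inv_cancel₀ ht, one_smul]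

end

theorem statement1_general (M N : ℕ)
    (C : Matrix (Fin M) (Fin N) ℝ) (ψ : Fin N → ℝ) (hψ : C.mulVec ψ ≠ 0) :
    IsLeast {r : ℝ | ∃ c₂ : Fin N → ℝ, r = frobSq (C - vecMulVec (C.mulVec ψ) c₂)}
        (frobSq C - vnormSq (Cᵀ.mulVec (C.mulVec ψ)) / vnormSq (C.mulVec ψ)) ∧
      0 ≤ frobSq C - vnormSq (Cᵀ.mulVec (C.mulVec ψ)) / vnormSq (C.mulVec ψ) ∧
      (frobSq C - vnormSq (Cᵀ.mulVec (C.mulVec ψ)) / vnormSq (C.mulVec ψ) = 0 ↔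
        ∃ (η₁ : Fin M → ℝ) (η₂ : Fin N → ℝ), C = vecMulVec η₁ η₂) := by
  have hleast := isLeast_frobSq_sub_vecMulVec C hψ
  obtain ⟨c₀, hc₀⟩ := hleast.1
  exact ⟨hleast, hc₀ ▸ frobSq_nonneg _,
    (frobSq_sub_div_vnormSq_eq_zero_iff C hψ).trans (exists_eq_vecMulVec_mulVec_iff hψ)⟩

/-- for `C ∈ ℝ^{M×N}`, `ψ ∈ ℝ^N` with `Cψ ≠ 0`, the partial-trace
deviation `D_ψ(C) = ‖C‖_F² − ‖CᵀCψ‖²/‖Cψ‖²` is (i) the minimum over `c₂` of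
`‖C − (Cψ)c₂ᵀ‖_F²` (hence `D_ψ(C) ≥ 0`), and (ii) `D_ψ(C) = 0` iff `C` is
separable, i.e. `C = η₁η₂ᵀ` for some vectors `η₁, η₂`. -/
theorem statement1 (M N : ℕ) (hM : 1 ≤ M) (hN : 1 ≤ N)
    (C : Matrix (Fin M) (Fin N) ℝ) (ψ : Fin N → ℝ) (hψ : C.mulVec ψ ≠ 0) :
    IsLeast {r : ℝ | ∃ c₂ : Fin N → ℝ, r = frobSq (C - vecMulVec (C.mulVec ψ) c₂)}
        (frobSq C - vnormSq (Cᵀ.mulVec (C.mulVec ψ)) / vnormSq (C.mulVec ψ)) ∧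
      0 ≤ frobSq C - vnormSq (Cᵀ.mulVec (C.mulVec ψ)) / vnormSq (C.mulVec ψ) ∧
      (frobSq C - vnormSq (Cᵀ.mulVec (C.mulVec ψ)) / vnormSq (C.mulVec ψ) = 0 ↔
        ∃ (η₁ : Fin M → ℝ) (η₂ : Fin N → ℝ), C = vecMulVec η₁ η₂) :=
  statement1_general M N C ψ hψ
end
end

section
/- Let M, N ≥ 1, let C ∈ ℝ^{M×N} and ψ ∈ ℝ^N with Cψ ≠ 0. Then the partial-trace deviation measure dominates the best rank-one approximation error: ‖C‖_F² − ‖CᵀCψ‖²/‖Cψ‖² ≥ inf{ ‖C − η₁η₂ᵀ‖_F² : η₁ ∈ ℝ^M, η₂ ∈ ℝ^N }. -/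
open scoped BigOperators
open Matrix

noncomputable section

/-- the partial-trace deviation measure dominates the squared
Frobenius distance to the best rank-one approximation:
`inf { ‖C − η₁η₂ᵀ‖_F² } ≤ ‖C‖_F² − ‖CᵀCψ‖²/‖Cψ‖²`. -/
theorem statement2 (M N : ℕ) (hM : 1 ≤ M) (hN : 1 ≤ N)
    (C : Matrix (Fin M) (Fin N) ℝ) (ψ : Fin N → ℝ) (hψ : C.mulVec ψ ≠ 0) :
    sInf {r : ℝ | ∃ (η₁ : Fin M → ℝ) (η₂ : Fin N → ℝ),
        r = frobSq (C - vecMulVec η₁ η₂)} ≤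
      frobSq C - vnormSq (Cᵀ.mulVec (C.mulVec ψ)) / vnormSq (C.mulVec ψ) := by
  set φ := C.mulVec ψ with hφ
  set w := Cᵀ.mulVec φ with hw
  set s := vnormSq φ with hs
  have hs0 : 0 < s := by
    rcases Function.ne_iff.mp hψ with ⟨i, hi⟩
    have : (0:ℝ) < φ i ^ 2 := by
      have h := sq_nonneg (φ i)
      rcases h.lt_or_eq with h' | h'
      · exact h'
      · exact absurd (pow_eq_zero_iff (n := 2) (by norm_num) |>.mp h'.symm) hi
    exact lt_of_lt_of_le this
      (Finset.single_le_sum (f := fun i => φ i ^ 2)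
        (fun j _ => sq_nonneg _) (Finset.mem_univ i))
  have hwj : ∀ j, w j = ∑ i, C i j * φ i := by
    intro j
    simp [hw, Matrix.mulVec, dotProduct, Matrix.transpose_apply]
  apply csInf_le
  · refine ⟨0, fun r hr => ?_⟩
    obtain ⟨a, b, rfl⟩ := hr
    exact Finset.sum_nonneg fun i _ => Finset.sum_nonneg fun j _ => sq_nonneg _
  · refine ⟨fun i => φ i / s, w, ?_⟩
    have expand : ∀ i j, (C i j - φ i / s * w j) ^ 2
        = C i j ^ 2 - 2 / s * (C i j * φ i * w j)
          + 1 / s ^ 2 * (φ i ^ 2 * w j ^ 2) := by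
      intro i j; field_simp; ring
    have h1 : ∑ i, ∑ j, C i j * φ i * w j = vnormSq w := by
      rw [Finset.sum_comm]
      refine Finset.sum_congr rfl fun j _ => ?_
      rw [show (∑ i, C i j * φ i * w j) = (∑ i, C i j * φ i) * w j by
            rw [← Finset.sum_mul], ← hwj j]
      ring
    have h2 : ∑ i, ∑ j, φ i ^ 2 * w j ^ 2 = s * vnormSq w := by
      rw [hs, vnormSq, vnormSq, Finset.sum_mul_sum]
    have : frobSq (C - vecMulVec (fun i => φ i / s) w)
        = frobSq C - 2 / s * vnormSq w + 1 / s ^ 2 * (s * vnormSq w) := by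
      simp only [frobSq, Matrix.sub_apply, Matrix.vecMulVec_apply]
      simp only [expand, Finset.sum_add_distrib, Finset.sum_sub_distrib,
        ← Finset.mul_sum, h1]
      congr 1
      rw [hs, vnormSq, vnormSq, Finset.sum_mul]
    rw [this]
    field_simp
    ring
end
end

section
/- Let u ∈ ℝ^M and v ∈ ℝ^N be unit vectors, σ ∈ ℝ, and E ∈ ℝ^{M×N}. With α = uᵀEv, the following Pythagorean identity for the Frobenius norm holds: ‖σuvᵀ + E‖_F² = (σ + α)² + ‖(I_M − uuᵀ)Ev‖² + ‖(I_N − vvᵀ)Eᵀu‖² + ‖(I_M − uuᵀ)E(I_N − vvᵀ)‖_F². -/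
open scoped BigOperators
open Matrix

noncomputable section

/-- Euclidean inner product of two vectors. -/
def vdot {n : ℕ} (x y : Fin n → ℝ) : ℝ := ∑ i, x i * y i

lemma projL_vec {M : ℕ} (u x : Fin M → ℝ) (i : Fin M) :
    (((1 : Matrix (Fin M) (Fin M) ℝ) - vecMulVec u u).mulVec x) i
      = x i - (∑ l, u l * x l) * u i := by
  simp [Matrix.mulVec, dotProduct, Matrix.sub_apply, Matrix.one_apply, vecMulVec_apply,
    sub_mul, Finset.sum_sub_distrib, Finset.mul_sum]
  rw [Finset.sum_mul]
  exact Finset.sum_congr rfl fun l _ => by ring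

lemma projL_mat {M N : ℕ} (u : Fin M → ℝ) (E : Matrix (Fin M) (Fin N) ℝ) (i : Fin M) (j : Fin N) :
    ((((1 : Matrix (Fin M) (Fin M) ℝ) - vecMulVec u u)) * E) i j
      = E i j - u i * ∑ l, u l * E l j := by
  simp [Matrix.mul_apply, Matrix.sub_apply, Matrix.one_apply, vecMulVec_apply,
    sub_mul, Finset.sum_sub_distrib, Finset.mul_sum, mul_assoc]

lemma projR_mat {M N : ℕ} (v : Fin N → ℝ) (X : Matrix (Fin M) (Fin N) ℝ) (i : Fin M) (j : Fin N) :
    (X * (((1 : Matrix (Fin N) (Fin N) ℝ) - vecMulVec v v))) i j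
      = X i j - (∑ k, X i k * v k) * v j := by
  simp [Matrix.mul_apply, Matrix.sub_apply, Matrix.one_apply, vecMulVec_apply,
    mul_sub, Finset.sum_sub_distrib, Finset.mul_sum]
  rw [Finset.sum_mul]
  exact Finset.sum_congr rfl fun k _ => by ring

lemma sum_sq_sub {n : ℕ} (x y : Fin n → ℝ) (c : ℝ) :
    ∑ i, (x i - c * y i) ^ 2
      = (∑ i, x i ^ 2) - 2 * c * (∑ i, y i * x i) + c ^ 2 * (∑ i, y i ^ 2) := by
  rw [Finset.mul_sum, Finset.mul_sum, ← Finset.sum_sub_distrib, ← Finset.sum_add_distrib]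
  exact Finset.sum_congr rfl fun i _ => by ring

/-- Pythagorean identity for the Frobenius norm: for unit vectors
`u, v`, scalar `σ` and any matrix `E`, with `α = uᵀEv`,
`‖σuvᵀ + E‖_F² = (σ+α)² + ‖(I−uuᵀ)Ev‖² + ‖(I−vvᵀ)Eᵀu‖² + ‖(I−uuᵀ)E(I−vvᵀ)‖_F²`. -/
theorem statement7 (M N : ℕ) (u : Fin M → ℝ) (v : Fin N → ℝ)
    (hu : vnormSq u = 1) (hv : vnormSq v = 1)
    (σ : ℝ) (E : Matrix (Fin M) (Fin N) ℝ) :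
    frobSq (σ • vecMulVec u v + E) =
      (σ + vdot u (E.mulVec v)) ^ 2
        + vnormSq (((1 : Matrix (Fin M) (Fin M) ℝ) - vecMulVec u u).mulVec (E.mulVec v))
        + vnormSq (((1 : Matrix (Fin N) (Fin N) ℝ) - vecMulVec v v).mulVec (Eᵀ.mulVec u))
        + frobSq ((1 - vecMulVec u u) * E * (1 - vecMulVec v v)) := by
  have hu' : ∑ i, u i ^ 2 = 1 := hu
  have hv' : ∑ j, v j ^ 2 = 1 := hv
  set a : Fin M → ℝ := fun i => ∑ j, E i j * v j with ha
  set b : Fin N → ℝ := fun j => ∑ i, u i * E i j with hb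
  set α : ℝ := ∑ i, u i * a i with hα
  set Sa : ℝ := ∑ i, a i ^ 2 with hSa
  set Sb : ℝ := ∑ j, b j ^ 2 with hSb
  set SE : ℝ := ∑ i, ∑ j, E i j ^ 2 with hSE
  have han : ∀ i, (∑ j, E i j * v j) = a i := fun _ => rfl
  have hbn : ∀ j, (∑ i, u i * E i j) = b j := fun _ => rfl
  have hF : ∑ j, v j * b j = α := by
    rw [hα]
    calc ∑ j, v j * b j = ∑ j, ∑ i, u i * E i j * v j := by
          refine Finset.sum_congr rfl fun j _ => ?_
          rw [← hbn j, Finset.mul_sum]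
          exact Finset.sum_congr rfl fun i _ => by ring
      _ = ∑ i, ∑ j, u i * E i j * v j := Finset.sum_comm
      _ = ∑ i, u i * a i := by
          refine Finset.sum_congr rfl fun i _ => ?_
          rw [← han i, Finset.mul_sum]
          exact Finset.sum_congr rfl fun j _ => by ring
  have hG : ∑ i, u i * (∑ j, E i j * b j) = Sb := by
    rw [hSb]
    calc ∑ i, u i * (∑ j, E i j * b j) = ∑ i, ∑ j, u i * E i j * b j := by
          refine Finset.sum_congr rfl fun i _ => ?_
          rw [Finset.mul_sum]
          exact Finset.sum_congr rfl fun j _ => by ring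
      _ = ∑ j, ∑ i, u i * E i j * b j := Finset.sum_comm
      _ = ∑ j, b j ^ 2 := by
          refine Finset.sum_congr rfl fun j _ => ?_
          rw [← Finset.sum_mul, hbn j]; ring
  have hvd : vdot u (E.mulVec v) = α := rfl
  have e1 : ∀ i, ((1 - vecMulVec u u).mulVec (E.mulVec v)) i = a i - α * u i := by
    intro i
    rw [projL_vec]
    have h1 : (E.mulVec v) i = a i := rfl
    have h2 : (∑ l, u l * (E.mulVec v) l) = α := rfl
    rw [h1, h2]
  have e2 : ∀ j, ((1 - vecMulVec v v).mulVec (Eᵀ.mulVec u)) j = b j - α * v j := by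
    intro j
    rw [projL_vec]
    have h1 : ∀ j, (Eᵀ.mulVec u) j = b j := by
      intro j
      show ∑ i, Eᵀ j i * u i = b j
      rw [← hbn j]
      exact Finset.sum_congr rfl fun i _ => by rw [Matrix.transpose_apply]; ring
    have h2 : (∑ l, v l * (Eᵀ.mulVec u) l) = α := by
      simp only [h1]; exact hF
    rw [h1, h2]
  have e3 : ∀ i j, (((1 : Matrix (Fin M) (Fin M) ℝ) - vecMulVec u u) * E
        * ((1 : Matrix (Fin N) (Fin N) ℝ) - vecMulVec v v)) i j
      = (E i j - u i * b j) - (a i - α * u i) * v j := by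
    intro i j
    rw [projR_mat]
    have h1 : ∀ k, ((((1 : Matrix (Fin M) (Fin M) ℝ) - vecMulVec u u)) * E) i k
        = E i k - u i * b k := by
      intro k; rw [projL_mat, hbn k]
    simp only [h1]
    have h2 : ∑ k, (E i k - u i * b k) * v k = a i - α * u i := by
      have h3 : ∑ k, (E i k - u i * b k) * v k
          = (∑ k, E i k * v k) - u i * (∑ k, v k * b k) := by
        rw [Finset.mul_sum, ← Finset.sum_sub_distrib]
        exact Finset.sum_congr rfl fun k _ => by ring
      rw [h3, han i, hF]; ring
    rw [h2]
  -- unfold the goal to sums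
  simp only [frobSq, vnormSq, hvd, e1, e2, e3, Matrix.add_apply, Matrix.smul_apply,
    vecMulVec_apply, smul_eq_mul]
  -- closed forms
  have T1 : ∑ i, ∑ j, (σ * (u i * v j) + E i j) ^ 2 = σ ^ 2 + 2 * σ * α + SE := by
    calc ∑ i, ∑ j, (σ * (u i * v j) + E i j) ^ 2
        = ∑ i, (σ ^ 2 * u i ^ 2 + 2 * σ * (u i * a i) + ∑ j, E i j ^ 2) := by
          refine Finset.sum_congr rfl fun i _ => ?_
          have row : ∑ j, (σ * (u i * v j) + E i j) ^ 2
              = σ ^ 2 * u i ^ 2 * (∑ j, v j ^ 2) + 2 * σ * u i * (∑ j, E i j * v j)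
                + ∑ j, E i j ^ 2 := by
            rw [Finset.mul_sum, Finset.mul_sum, ← Finset.sum_add_distrib, ← Finset.sum_add_distrib]
            exact Finset.sum_congr rfl fun j _ => by ring
          rw [row, hv', han i]; ring
      _ = σ ^ 2 * (∑ i, u i ^ 2) + 2 * σ * (∑ i, u i * a i) + ∑ i, ∑ j, E i j ^ 2 := by
          rw [Finset.mul_sum, Finset.mul_sum, ← Finset.sum_add_distrib, ← Finset.sum_add_distrib]
      _ = σ ^ 2 + 2 * σ * α + SE := by rw [hu', ← hα, ← hSE]; ring
  have T2 : ∑ i, (a i - α * u i) ^ 2 = Sa - 2 * α * α + α ^ 2 := by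
    rw [sum_sq_sub, hu', ← hα, ← hSa]; ring
  have T3 : ∑ j, (b j - α * v j) ^ 2 = Sb - 2 * α * α + α ^ 2 := by
    rw [sum_sq_sub, hv', hF, ← hSb]; ring
  have s2 : ∑ i, ((a i - α * u i) * a i) = Sa - α * α := by
    have h : ∀ i, (a i - α * u i) * a i = a i ^ 2 - α * (u i * a i) := fun i => by ring
    simp only [h]
    rw [Finset.sum_sub_distrib, ← Finset.mul_sum, ← hα, ← hSa]
  have s3 : ∑ i, (u i * (a i - α * u i)) = 0 := by
    have h : ∀ i, u i * (a i - α * u i) = u i * a i - α * u i ^ 2 := fun i => by ring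
    simp only [h]
    rw [Finset.sum_sub_distrib, ← Finset.mul_sum, ← hα, hu']; ring
  have T4 : ∑ i, ∑ j, ((E i j - u i * b j) - (a i - α * u i) * v j) ^ 2
      = SE - Sa - Sb + α * α := by
    calc ∑ i, ∑ j, ((E i j - u i * b j) - (a i - α * u i) * v j) ^ 2
        = ∑ i, ((∑ j, E i j ^ 2) + Sb * u i ^ 2 + (a i - α * u i) ^ 2
            + (-2) * (u i * (∑ j, E i j * b j)) + (-2) * ((a i - α * u i) * a i)
            + (2 * α) * (u i * (a i - α * u i))) := by
          refine Finset.sum_congr rfl fun i _ => ?_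
          have row : ∑ j, ((E i j - u i * b j) - (a i - α * u i) * v j) ^ 2
              = (∑ j, E i j ^ 2) + u i ^ 2 * (∑ j, b j ^ 2)
                + (a i - α * u i) ^ 2 * (∑ j, v j ^ 2)
                - 2 * u i * (∑ j, E i j * b j)
                - 2 * (a i - α * u i) * (∑ j, E i j * v j)
                + 2 * (u i * (a i - α * u i)) * (∑ j, v j * b j) := by
            rw [Finset.mul_sum, Finset.mul_sum, Finset.mul_sum, Finset.mul_sum, Finset.mul_sum,
              ← Finset.sum_add_distrib, ← Finset.sum_add_distrib, ← Finset.sum_sub_distrib,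
              ← Finset.sum_sub_distrib, ← Finset.sum_add_distrib]
            exact Finset.sum_congr rfl fun j _ => by ring
          rw [row, hv', hF, han i, ← hSb]; ring
      _ = SE + Sb * (∑ i, u i ^ 2) + (∑ i, (a i - α * u i) ^ 2)
            + (-2) * (∑ i, u i * (∑ j, E i j * b j))
            + (-2) * (∑ i, (a i - α * u i) * a i)
            + (2 * α) * (∑ i, u i * (a i - α * u i)) := by
          simp only [Finset.sum_add_distrib]
          rw [← Finset.mul_sum, ← Finset.mul_sum, ← Finset.mul_sum, ← Finset.mul_sum, ← hSE]
      _ = SE - Sa - Sb + α * α := by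
          rw [hu', hG, T2, s2, s3]; ring
  rw [T1, T2, T3, T4]; ring

end
end

section
/- Let C ∈ ℝ^{M×N} with σ := ‖C‖_op > 0, and suppose u ∈ ℝ^M and v ∈ ℝ^N are unit vectors with Cv = σu and Cᵀu = σv, and that the largest singular value of C is simple, i.e. ‖Cw‖ < σ for every unit vector w ∈ ℝ^N orthogonal to v. Then the map E ↦ ‖C + E‖_op² is Fréchet differentiable at E = 0 with derivative E ↦ 2σ·uᵀEv; that is, for every ε > 0 there exists δ > 0 such that for all E ∈ ℝ^{M×N} with 0 < ‖E‖_F < δ: | ‖C + E‖_op² − σ² − 2σ·uᵀEv | ≤ ε·‖E‖_F. -/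
open scoped BigOperators
open Matrix

noncomputable section

/-- The spectral (ℓ²-operator) norm of a real matrix:
`‖A‖_op = sup { ‖Ax‖ : ‖x‖ = 1 }`, which equals the largest singular value. -/
def opNorm {M N : ℕ} (A : Matrix (Fin M) (Fin N) ℝ) : ℝ :=
  sSup {r : ℝ | ∃ x : Fin N → ℝ, vnormSq x = 1 ∧ r = Real.sqrt (vnormSq (A.mulVec x))}

/-!
Write a unit vector as `x = ⟪x, v⟫ v + w` with `w ⊥ v`. As `C v = σ u` and `C` maps `v^⊥` into
`u^⊥`, `‖C x‖² = ⟪x, v⟫² σ² + ‖C w‖² ≤ σ² - (σ² - s²) ‖w‖²`, where `s < σ` bounds `C` on `v^⊥`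
(by compactness of the unit sphere of `v^⊥`). In `‖(C + E) x‖²` the cross term differs from
`σ ⟪u, E v⟫` by `O(‖E‖ ‖w‖)`, which the gap `(σ² - s²) ‖w‖²` absorbs up to `O(‖E‖²)`; testing at
`x = v` gives the matching lower bound. So `‖C + E‖² = σ² + 2σ ⟪u, E v⟫ + O(‖E‖²)`, and the
operator norm of `E` is at most its Frobenius norm.
-/

open scoped RealInnerProductSpace
open WithLp (toLp ofLp)

section

variable {V W : Type*} [NormedAddCommGroup V] [InnerProductSpace ℝ V]
  [NormedAddCommGroup W] [InnerProductSpace ℝ W]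

theorem exists_spectral_gap [FiniteDimensional ℝ V] (C : V →L[ℝ] W) (v : V) {σ : ℝ}
    (hσ : 0 < σ) (h : ∀ w, ‖w‖ = 1 → ⟪w, v⟫ = 0 → ‖C w‖ < σ) :
    ∃ s, 0 ≤ s ∧ s < σ ∧ ∀ w, ⟪w, v⟫ = 0 → ‖C w‖ ≤ s * ‖w‖ := by
  have hK : IsCompact (Metric.sphere (0 : V) 1 ∩ {w | ⟪w, v⟫ = 0}) :=
    (isCompact_sphere 0 1).inter_right (isClosed_eq (by fun_prop) continuous_const)
  obtain ⟨a, ha, hle⟩ := hK.exists_forall_le' (f := fun w => σ - ‖C w‖) (by fun_prop)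
    (a := 0) fun w ⟨hw1, hwv⟩ => sub_pos.2 (h w (mem_sphere_zero_iff_norm.1 hw1) hwv)
  refine ⟨max (σ - a) 0, le_max_right _ _, max_lt (by linarith) hσ, fun w hwv => ?_⟩
  rcases eq_or_ne w 0 with rfl | hw0
  · simp
  have hw : 0 < ‖w‖ := norm_pos_iff.2 hw0
  have := hle (‖w‖⁻¹ • w)
    ⟨by simp [norm_smul, hw.ne'], by simp [real_inner_smul_left, hwv]⟩
  rw [map_smul, norm_smul, norm_inv, norm_norm, ← div_eq_inv_mul, le_sub_comm,
    div_le_iff₀ hw] at this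
  exact this.trans (mul_le_mul_of_nonneg_right (le_max_left _ _) hw.le)

variable {C P : V →L[ℝ] W} {u : W} {v x : V} {σ s : ℝ}

theorem inner_sub_inner_smul_self (hv : ‖v‖ = 1) (x : V) : ⟪x - ⟪x, v⟫ • v, v⟫ = 0 := by
  simp [inner_sub_left, real_inner_smul_left, hv]

theorem apply_eq_apply_sub_add_smul (hCv : C v = σ • u) (x : V) :
    C x = C (x - ⟪x, v⟫ • v) + (⟪x, v⟫ * σ) • u := by
  rw [← smul_smul, ← hCv, ← map_smul, ← map_add, sub_add_cancel]

theorem norm_apply_sq_le (hu : ‖u‖ = 1) (hv : ‖v‖ = 1) (hCv : C v = σ • u)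
    (hCu : ∀ w, ⟪C w, u⟫ = σ * ⟪w, v⟫) (hgap : ∀ w, ⟪w, v⟫ = 0 → ‖C w‖ ≤ s * ‖w‖)
    (hx : ‖x‖ = 1) :
    ‖C x‖ ^ 2 ≤ σ ^ 2 - (σ ^ 2 - s ^ 2) * ‖x - ⟪x, v⟫ • v‖ ^ 2 := by
  have hCx := apply_eq_apply_sub_add_smul hCv x
  have hwv := inner_sub_inner_smul_self hv x
  set α := ⟪x, v⟫
  set w := x - α • v
  have hw : ‖w‖ ^ 2 = 1 - α ^ 2 := by
    simp only [w, norm_sub_sq_real, real_inner_smul_right, norm_smul, hx, hv, Real.norm_eq_abs,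
      mul_pow, sq_abs]
    ring
  have hCw : ‖C w‖ ^ 2 ≤ s ^ 2 * ‖w‖ ^ 2 := by
    rw [← mul_pow]; exact pow_le_pow_left₀ (norm_nonneg _) (hgap w hwv) 2
  rw [hCx, norm_add_sq_real, real_inner_smul_right, hCu, hwv, norm_smul, hu, Real.norm_eq_abs]
  nlinarith [sq_abs (α * σ)]

theorem norm_sub_inner_smul_eq (hv : ‖v‖ = 1) (hx : ‖x‖ = 1) :
    ‖⟪x, v⟫ • x - v‖ = ‖x - ⟪x, v⟫ • v‖ := by
  refine (sq_eq_sq₀ (norm_nonneg _) (norm_nonneg _)).1 ?_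
  simp only [norm_sub_sq_real, real_inner_smul_left, real_inner_smul_right, norm_smul, hx, hv,
    Real.norm_eq_abs, mul_pow, sq_abs]
  ring

theorem inner_apply_apply_le (hu : ‖u‖ = 1) (hv : ‖v‖ = 1) (hCv : C v = σ • u)
    (hgap : ∀ w, ⟪w, v⟫ = 0 → ‖C w‖ ≤ s * ‖w‖) (hs : 0 ≤ s) (hsσ : s ≤ σ) (hx : ‖x‖ = 1) :
    ⟪C x, P x⟫ ≤ σ * ⟪u, P v⟫ + 2 * σ * ‖P‖ * ‖x - ⟪x, v⟫ • v‖ := by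
  have hCx := apply_eq_apply_sub_add_smul hCv x
  have hwv := inner_sub_inner_smul_self hv x
  set α := ⟪x, v⟫
  set w := x - α • v
  -- the error term `P (α • x - v)` is small because `‖α • x - v‖ = ‖w‖`
  have hsplit : ⟪C x, P x⟫ - σ * ⟪u, P v⟫ = ⟪C w, P x⟫ + σ * ⟪u, P (α • x - v)⟫ := by
    rw [hCx, inner_add_left, real_inner_smul_left, P.map_sub, P.map_smul, inner_sub_right,
      real_inner_smul_right]
    ring
  have hσ : 0 ≤ σ := hs.trans hsσ
  have h1 : ⟪C w, P x⟫ ≤ σ * ‖P‖ * ‖w‖ :=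
    calc ⟪C w, P x⟫ ≤ ‖C w‖ * ‖P x‖ := real_inner_le_norm _ _
      _ ≤ (σ * ‖w‖) * ‖P‖ := by
        gcongr
        · exact (hgap w hwv).trans (by gcongr)
        · simpa [hx] using P.le_opNorm x
      _ = σ * ‖P‖ * ‖w‖ := by ring
  have h2 : σ * ⟪u, P (α • x - v)⟫ ≤ σ * ‖P‖ * ‖w‖ :=
    calc σ * ⟪u, P (α • x - v)⟫ ≤ σ * (‖u‖ * ‖P (α • x - v)‖) := by
          gcongr; exact real_inner_le_norm _ _
      _ ≤ σ * ‖P‖ * ‖w‖ := by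
        rw [hu, one_mul, mul_assoc, ← norm_sub_inner_smul_eq hv hx]
        gcongr
        exact P.le_opNorm _
  linarith

theorem norm_add_apply_sq_le (hu : ‖u‖ = 1) (hv : ‖v‖ = 1) (hCv : C v = σ • u)
    (hCu : ∀ w, ⟪C w, u⟫ = σ * ⟪w, v⟫) (hgap : ∀ w, ⟪w, v⟫ = 0 → ‖C w‖ ≤ s * ‖w‖)
    (hs : 0 ≤ s) (hsσ : s < σ) (hx : ‖x‖ = 1) :
    ‖(C + P) x‖ ^ 2 ≤
      σ ^ 2 + 2 * σ * ⟪u, P v⟫ + (1 + 4 * σ ^ 2 / (σ ^ 2 - s ^ 2)) * ‖P‖ ^ 2 := by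
  set r := ‖x - ⟪x, v⟫ • v‖
  have hγ : 0 < σ ^ 2 - s ^ 2 := by nlinarith
  have hC := norm_apply_sq_le hu hv hCv hCu hgap hx
  have hCP := inner_apply_apply_le (P := P) hu hv hCv hgap hs hsσ.le hx
  have hP : ‖P x‖ ^ 2 ≤ ‖P‖ ^ 2 := by
    gcongr; simpa [hx] using P.le_opNorm x
  -- `4 σ ‖P‖ r ≤ γ r² + 4 σ² ‖P‖² / γ` is `(γ r - 2 σ ‖P‖)² / γ ≥ 0`
  have hAMGM :
      4 * σ * ‖P‖ * r ≤ (σ ^ 2 - s ^ 2) * r ^ 2 + 4 * σ ^ 2 / (σ ^ 2 - s ^ 2) * ‖P‖ ^ 2 := by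
    have : (σ ^ 2 - s ^ 2) * r ^ 2 + 4 * σ ^ 2 / (σ ^ 2 - s ^ 2) * ‖P‖ ^ 2 - 4 * σ * ‖P‖ * r =
        ((σ ^ 2 - s ^ 2) * r - 2 * σ * ‖P‖) ^ 2 / (σ ^ 2 - s ^ 2) := by
      field_simp; ring
    linarith [div_nonneg (sq_nonneg ((σ ^ 2 - s ^ 2) * r - 2 * σ * ‖P‖)) hγ.le]
  rw [_root_.add_apply, norm_add_sq_real]
  linarith

theorem abs_sq_opNorm_add_sub_le (hu : ‖u‖ = 1) (hv : ‖v‖ = 1) (hCv : C v = σ • u)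
    (hCu : ∀ w, ⟪C w, u⟫ = σ * ⟪w, v⟫) (hgap : ∀ w, ⟪w, v⟫ = 0 → ‖C w‖ ≤ s * ‖w‖)
    (hs : 0 ≤ s) (hsσ : s < σ) :
    |‖C + P‖ ^ 2 - σ ^ 2 - 2 * σ * ⟪u, P v⟫| ≤
      (1 + 4 * σ ^ 2 / (σ ^ 2 - s ^ 2)) * ‖P‖ ^ 2 := by
  set K := 1 + 4 * σ ^ 2 / (σ ^ 2 - s ^ 2)
  have hK : 0 ≤ K * ‖P‖ ^ 2 :=
    mul_nonneg (add_nonneg zero_le_one (div_nonneg (by positivity) (by nlinarith))) (sq_nonneg _)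
  have hlow : σ ^ 2 + 2 * σ * ⟪u, P v⟫ ≤ ‖C + P‖ ^ 2 :=
    calc σ ^ 2 + 2 * σ * ⟪u, P v⟫ ≤ ‖(C + P) v‖ ^ 2 := by
          rw [_root_.add_apply, hCv, norm_add_sq_real, norm_smul, hu,
            real_inner_smul_left, Real.norm_eq_abs, mul_one, sq_abs]
          nlinarith [sq_nonneg ‖P v‖]
      _ ≤ ‖C + P‖ ^ 2 := by gcongr; simpa [hv] using (C + P).le_opNorm v
  have hup : ‖C + P‖ ^ 2 ≤ σ ^ 2 + 2 * σ * ⟪u, P v⟫ + K * ‖P‖ ^ 2 := by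
    have hbound x (hx : ‖x‖ = 1) := norm_add_apply_sq_le (P := P) hu hv hCv hCu hgap hs hsσ hx
    have hnorm := (C + P).opNorm_le_of_unit_norm (Real.sqrt_nonneg _)
      fun x hx => Real.le_sqrt_of_sq_le (hbound x hx)
    exact (Real.le_sqrt (norm_nonneg _) ((sq_nonneg _).trans (hbound v hv))).1 hnorm
  rw [abs_le]
  constructor <;> linarith

end

def toL2CLM {m n : ℕ} :
    Matrix (Fin m) (Fin n) ℝ ≃ₗ[ℝ] (EuclideanSpace ℝ (Fin n) →L[ℝ] EuclideanSpace ℝ (Fin m)) :=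
  (toLpLin 2 2).trans LinearMap.toContinuousLinearMap

section
variable {m n : ℕ}

theorem toL2CLM_toLp (A : Matrix (Fin m) (Fin n) ℝ) (x : Fin n → ℝ) :
    toL2CLM A (toLp 2 x) = toLp 2 (A *ᵥ x) := rfl

theorem vnormSq_ofLp (x : EuclideanSpace ℝ (Fin n)) : vnormSq (ofLp x) = ‖x‖ ^ 2 :=
  (EuclideanSpace.real_norm_sq_eq x).symm

theorem norm_eq_sqrt_vnormSq (x : EuclideanSpace ℝ (Fin n)) : ‖x‖ = √(vnormSq (ofLp x)) := by
  rw [vnormSq_ofLp, Real.sqrt_sq (norm_nonneg x)]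

theorem vdot_ofLp (x y : EuclideanSpace ℝ (Fin n)) : vdot (ofLp x) (ofLp y) = ⟪x, y⟫ := by
  simp [vdot, EuclideanSpace.inner_eq_star_dotProduct, dotProduct, mul_comm]

theorem inner_toL2CLM_apply (A : Matrix (Fin m) (Fin n) ℝ) (x : EuclideanSpace ℝ (Fin n))
    (y : EuclideanSpace ℝ (Fin m)) : ⟪toL2CLM A x, y⟫ = ⟪x, toL2CLM Aᵀ y⟫ := by
  change ofLp y ⬝ᵥ star (A *ᵥ ofLp x) = ofLp (toLp 2 (Aᵀ *ᵥ ofLp y)) ⬝ᵥ star (ofLp x)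
  rw [star_trivial, star_trivial, dotProduct_mulVec, mulVec_transpose, dotProduct_comm]

theorem vnormSq_mulVec_le (A : Matrix (Fin m) (Fin n) ℝ) (x : Fin n → ℝ) :
    vnormSq (A *ᵥ x) ≤ frobSq A * vnormSq x := by
  rw [frobSq, Finset.sum_mul]
  exact Finset.sum_le_sum fun i _ => Finset.sum_mul_sq_le_sq_mul_sq Finset.univ (A i) x

theorem norm_toL2CLM_le (A : Matrix (Fin m) (Fin n) ℝ) : ‖toL2CLM A‖ ≤ √(frobSq A) := by
  refine (toL2CLM A).opNorm_le_bound (Real.sqrt_nonneg _) fun x => ?_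
  rw [norm_eq_sqrt_vnormSq, norm_eq_sqrt_vnormSq,
    ← Real.sqrt_mul' _ (by rw [vnormSq_ofLp]; positivity)]
  exact Real.sqrt_le_sqrt (vnormSq_mulVec_le A (ofLp x))

theorem opNorm_eq_norm_toL2CLM (A : Matrix (Fin m) (Fin n) ℝ) : opNorm A = ‖toL2CLM A‖ := by
  rw [← (toL2CLM A).sSup_sphere_eq_norm, opNorm]
  congr 1
  ext r
  constructor
  · rintro ⟨x, hx, rfl⟩
    exact ⟨toLp 2 x, by simp [norm_eq_sqrt_vnormSq, hx],
      by simp [norm_eq_sqrt_vnormSq, toL2CLM_toLp]⟩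
  · rintro ⟨x, hx, rfl⟩
    exact ⟨ofLp x, by simpa [norm_eq_sqrt_vnormSq] using hx, norm_eq_sqrt_vnormSq _⟩

end

theorem statement11_general (M N : ℕ) (C : Matrix (Fin M) (Fin N) ℝ) (σ : ℝ)
    (hσpos : 0 < σ)
    (u : Fin M → ℝ) (v : Fin N → ℝ) (hu : vnormSq u = 1) (hv : vnormSq v = 1)
    (hCv : C.mulVec v = σ • u) (hCu : Cᵀ.mulVec u = σ • v)
    (hsimple : ∀ w : Fin N → ℝ, vnormSq w = 1 → vdot w v = 0 →
      Real.sqrt (vnormSq (C.mulVec w)) < σ) :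
    ∀ ε : ℝ, 0 < ε → ∃ δ : ℝ, 0 < δ ∧
      ∀ E : Matrix (Fin M) (Fin N) ℝ,
        0 < Real.sqrt (frobSq E) → Real.sqrt (frobSq E) < δ →
        |opNorm (C + E) ^ 2 - σ ^ 2 - 2 * σ * vdot u (E.mulVec v)| ≤
          ε * Real.sqrt (frobSq E) := by
  intro ε hε
  have hu' : ‖toLp 2 u‖ = 1 := by simp [norm_eq_sqrt_vnormSq, hu]
  have hv' : ‖toLp 2 v‖ = 1 := by simp [norm_eq_sqrt_vnormSq, hv]
  have hCv' : toL2CLM C (toLp 2 v) = σ • toLp 2 u := by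
    rw [toL2CLM_toLp, hCv, WithLp.toLp_smul]
  have hCu' (w : EuclideanSpace ℝ (Fin N)) : ⟪toL2CLM C w, toLp 2 u⟫ = σ * ⟪w, toLp 2 v⟫ := by
    rw [inner_toL2CLM_apply, toL2CLM_toLp, hCu, WithLp.toLp_smul, real_inner_smul_right]
  obtain ⟨s, hs, hsσ, hgap⟩ := exists_spectral_gap (toL2CLM C) (toLp 2 v) hσpos
    fun w hw hwv => by
      rw [norm_eq_sqrt_vnormSq]
      exact hsimple (ofLp w) (by rw [vnormSq_ofLp, hw, one_pow]) ((vdot_ofLp w _).trans hwv)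
  set K := 1 + 4 * σ ^ 2 / (σ ^ 2 - s ^ 2)
  have hK : 0 < K := by
    have : 0 < σ ^ 2 - s ^ 2 := by nlinarith
    positivity
  refine ⟨ε / K, div_pos hε hK, fun E _ hEδ => ?_⟩
  have hE := abs_sq_opNorm_add_sub_le (P := toL2CLM E) hu' hv' hCv' hCu' hgap hs hsσ
  rw [← map_add, ← opNorm_eq_norm_toL2CLM, ← vdot_ofLp] at hE
  calc _ ≤ K * ‖toL2CLM E‖ ^ 2 := hE
    _ ≤ K * √(frobSq E) ^ 2 := by gcongr; exact norm_toL2CLM_le E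
    _ = (K * √(frobSq E)) * √(frobSq E) := by ring
    _ ≤ ε * √(frobSq E) := by gcongr; exact ((lt_div_iff₀' hK).1 hEδ).le

/-- if `σ = ‖C‖_op > 0`, `u, v` are unit singular vectors with
`Cv = σu`, `Cᵀu = σv` and the largest singular value is simple
(`‖Cw‖ < σ` for every unit `w ⊥ v`), then `E ↦ ‖C+E‖_op²` is Fréchet
differentiable at `0` with derivative `E ↦ 2σ·uᵀEv`:
for every `ε > 0` there is `δ > 0` with
`|‖C+E‖_op² − σ² − 2σ·uᵀEv| ≤ ε‖E‖_F` whenever `0 < ‖E‖_F < δ`. -/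
theorem statement11 (M N : ℕ) (C : Matrix (Fin M) (Fin N) ℝ) (σ : ℝ)
    (hσ : σ = opNorm C) (hσpos : 0 < σ)
    (u : Fin M → ℝ) (v : Fin N → ℝ) (hu : vnormSq u = 1) (hv : vnormSq v = 1)
    (hCv : C.mulVec v = σ • u) (hCu : Cᵀ.mulVec u = σ • v)
    (hsimple : ∀ w : Fin N → ℝ, vnormSq w = 1 → vdot w v = 0 →
      Real.sqrt (vnormSq (C.mulVec w)) < σ) :
    ∀ ε : ℝ, 0 < ε → ∃ δ : ℝ, 0 < δ ∧
      ∀ E : Matrix (Fin M) (Fin N) ℝ,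
        0 < Real.sqrt (frobSq E) → Real.sqrt (frobSq E) < δ →
        |opNorm (C + E) ^ 2 - σ ^ 2 - 2 * σ * vdot u (E.mulVec v)| ≤
          ε * Real.sqrt (frobSq E) :=
  statement11_general M N C σ hσpos u v hu hv hCv hCu hsimple

end
end

section
/- Suppose the positive integers m_A(T) ≤ m_B(T) and ρ(T) and the reals b(T) > 0 satisfy: m_A(T) → ∞; ρ(T) → ∞ with ρ(T) ≤ m_A(T) and ρ(T)/m_A(T) → 0; b(T) → 0 and T·b(T) → ∞; m_B(T)/T → 1 and m_A(T)/T → 0. Then there exist a constant Λ > 0 and T₀ ∈ ℕ such that for every T ≥ T₀ and every pair of integer intervals A = {a₁, …, a₁+m_A(T)−1} ⊆ {1, …, T} and B = {b₁, …, b₁+m_B(T)−1} ⊆ {1, …, T}: (i) Σ_{t∈A} Σ_{t',t''∈B, 0<|t'−t''|≤ρ(T)} K( (|t−t'|/T − u₀)/b(T) ) · K( (|t−t''|/T − u₀)/b(T) ) ≤ Λ · m_A(T) · m_B(T) · ρ(T) · b(T); and (ii) Σ_{t∈A} Σ_{t'∈B} K²( (|t−t'|/T − u₀)/b(T) ) ≤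 Λ · m_A(T) · m_B(T) · b(T). -/
/-!
Since `K` is maximal at `0` and vanishes outside `[-1, 1]`, for fixed `t` the weight
`K ((|t - t'| / T - u₀) / b)` is nonzero only when `| |t - t'| - u₀ T | ≤ T b`, which allows at
most `4 T b + 2` values of `t'`, and each of them is at most `K 0`. Eventually `T b ≥ 2` and
`T ≤ 2 m_B`, so `4 T b + 2 ≤ 10 m_B b`; in (i) each `t'` admits at most `2 ρ` partners `t''`.
-/

open Filter Finset

noncomputable section

theorem Finset.natCast_card_le_of_sub_le {S : Finset ℕ} {L : ℝ} (hL : 0 ≤ L)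
    (hS : ∀ m ∈ S, ∀ n ∈ S, (n : ℝ) - m ≤ L) : (#S : ℝ) ≤ L + 1 := by
  rcases S.eq_empty_or_nonempty with rfl | hne
  · simp; linarith
  have hsub : S ⊆ Icc (S.min' hne) (S.max' hne) := fun n hn =>
    mem_Icc.mpr ⟨S.min'_le n hn, S.le_max' n hn⟩
  have hcard : #S ≤ S.max' hne + 1 - S.min' hne :=
    (card_le_card hsub).trans (Nat.card_Icc _ _).le
  have hmin : S.min' hne ≤ S.max' hne + 1 := (S.min'_le_max' hne).trans (Nat.le_succ _)
  have := hS _ (S.min'_mem hne) _ (S.max'_mem hne)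
  calc (#S : ℝ) ≤ ((S.max' hne + 1 - S.min' hne : ℕ) : ℝ) := by exact_mod_cast hcard
    _ ≤ L + 1 := by push_cast [hmin]; linarith

theorem card_filter_ne_abs_sub_le (s : Finset ℕ) (c r : ℕ) :
    (#(s.filter fun n => n ≠ c ∧ |(n : ℝ) - c| ≤ r) : ℝ) ≤ 2 * r := by
  set S := s.filter fun n => n ≠ c ∧ |(n : ℝ) - c| ≤ r
  have hc : c ∉ S := by simp [S]
  have hdiam : ∀ m ∈ insert c S, ∀ n ∈ insert c S, (n : ℝ) - m ≤ 2 * r := by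
    have hnear : ∀ n ∈ insert c S, |(n : ℝ) - c| ≤ r := by
      simp only [mem_insert, mem_filter, S]
      rintro n (rfl | ⟨-, -, h⟩)
      · simp
      · exact h
    intro m hm n hn
    linarith [(abs_le.mp (hnear m hm)).1, (abs_le.mp (hnear n hn)).2]
  have := natCast_card_le_of_sub_le (by positivity) hdiam
  rw [card_insert_of_notMem hc] at this
  push_cast at this
  linarith

theorem card_filter_abs_abs_sub_sub_le (s : Finset ℕ) (t : ℕ) {c r : ℝ} (hr : 0 ≤ r) :
    (#(s.filter fun n : ℕ => |(|(t : ℝ) - n| - c)| ≤ r) : ℝ) ≤ 4 * r + 2 := by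
  set S := s.filter fun n : ℕ => |(|(t : ℝ) - n| - c)| ≤ r
  have hbelow : (#(S.filter (· ≤ t)) : ℝ) ≤ 2 * r + 1 := by
    refine natCast_card_le_of_sub_le (by positivity) fun m hm n hn => ?_
    simp only [mem_filter, S] at hm hn
    have hmt : (m : ℝ) ≤ t := by exact_mod_cast hm.2
    have hnt : (n : ℝ) ≤ t := by exact_mod_cast hn.2
    rw [abs_of_nonneg (sub_nonneg.mpr hmt)] at hm
    rw [abs_of_nonneg (sub_nonneg.mpr hnt)] at hn
    linarith [(abs_le.mp hm.1.2).2, (abs_le.mp hn.1.2).1]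
  have habove : (#(S.filter fun n => ¬ n ≤ t) : ℝ) ≤ 2 * r + 1 := by
    refine natCast_card_le_of_sub_le (by positivity) fun m hm n hn => ?_
    simp only [mem_filter, not_le, S] at hm hn
    have hmt : (t : ℝ) ≤ m := by exact_mod_cast hm.2.le
    have hnt : (t : ℝ) ≤ n := by exact_mod_cast hn.2.le
    rw [abs_of_nonpos (sub_nonpos.mpr hmt)] at hm
    rw [abs_of_nonpos (sub_nonpos.mpr hnt)] at hn
    linarith [(abs_le.mp hm.1.2).1, (abs_le.mp hn.1.2).2]
  have hsplit := card_filter_add_card_filter_not (s := S) (· ≤ t)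
  have : (#S : ℝ) = #(S.filter (· ≤ t)) + #(S.filter fun n => ¬ n ≤ t) := by
    exact_mod_cast hsplit.symm
  linarith

theorem le_apply_zero_of_symm_of_antitoneOn {K : ℝ → ℝ} (hK0 : 0 ≤ K 0)
    (hKsymm : ∀ x, K (-x) = K x) (hKsupp : ∀ x, 1 < |x| → K x = 0)
    (hKmono : ∀ x y, 0 ≤ x → x ≤ y → y ≤ 1 → K y ≤ K x) (x : ℝ) : K x ≤ K 0 := by
  rcases le_or_gt |x| 1 with h | h
  · have hx : K |x| = K x := by
      rcases abs_choice x with h' | h' <;> rw [h']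
      exact hKsymm x
    exact hx ▸ hKmono 0 |x| le_rfl (abs_nonneg x) h
  · rw [hKsupp x h]; exact hK0

def lagWeight (K : ℝ → ℝ) (u₀ h T : ℝ) (t n : ℕ) : ℝ := K ((|(t : ℝ) - n| / T - u₀) / h)

section lagWeight

variable {K : ℝ → ℝ} {u₀ h T : ℝ}

theorem abs_abs_sub_sub_le_of_lagWeight_ne_zero (hKsupp : ∀ x, 1 < |x| → K x = 0)
    (hh : 0 < h) (hT : 0 < T) {t n : ℕ} (hw : lagWeight K u₀ h T t n ≠ 0) :
    |(|(t : ℝ) - n| - u₀ * T)| ≤ T * h := by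
  have hle : |(|(t : ℝ) - n| / T - u₀) / h| ≤ 1 := not_lt.mp (mt (hKsupp _) hw)
  have heq : (|(t : ℝ) - n| / T - u₀) / h = (|(t : ℝ) - n| - u₀ * T) / (T * h) := by
    field_simp
  rwa [heq, abs_div, abs_of_pos (mul_pos hT hh), div_le_one (mul_pos hT hh)] at hle

theorem sum_lagWeight_le (hK0 : ∀ x, 0 ≤ K x) (hKle : ∀ x, K x ≤ K 0)
    (hKsupp : ∀ x, 1 < |x| → K x = 0) (hh : 0 < h) (hT : 0 < T) (s : Finset ℕ) (t : ℕ) :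
    ∑ n ∈ s, lagWeight K u₀ h T t n ≤ K 0 * (4 * T * h + 2) := by
  set P := s.filter fun n => lagWeight K u₀ h T t n ≠ 0
  have hP : P ⊆ s.filter fun n : ℕ => |(|(t : ℝ) - n| - u₀ * T)| ≤ T * h :=
    fun n hn => by
      simp only [mem_filter, P] at hn ⊢
      exact ⟨hn.1, abs_abs_sub_sub_le_of_lagWeight_ne_zero hKsupp hh hT hn.2⟩
  have hcard : (#P : ℝ) ≤ 4 * T * h + 2 := by
    have := card_filter_abs_abs_sub_sub_le s t (c := u₀ * T) (mul_pos hT hh).le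
    have hsub : (#P : ℝ) ≤ #(s.filter fun n : ℕ => |(|(t : ℝ) - n| - u₀ * T)| ≤ T * h) := by
      exact_mod_cast card_le_card hP
    linarith
  calc ∑ n ∈ s, lagWeight K u₀ h T t n = ∑ n ∈ P, lagWeight K u₀ h T t n :=
        (sum_filter_ne_zero s).symm
    _ ≤ #P • K 0 := sum_le_card_nsmul _ _ _ fun n _ => hKle _
    _ ≤ K 0 * (4 * T * h + 2) := by
        rw [nsmul_eq_mul, mul_comm]; exact mul_le_mul_of_nonneg_left hcard (hK0 0)

theorem sum_sq_lagWeight_le (hK0 : ∀ x, 0 ≤ K x) (hKle : ∀ x, K x ≤ K 0)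
    (hKsupp : ∀ x, 1 < |x| → K x = 0) (hh : 0 < h) (hT : 0 < T) (s : Finset ℕ) (t : ℕ) :
    ∑ n ∈ s, lagWeight K u₀ h T t n ^ 2 ≤ K 0 * (K 0 * (4 * T * h + 2)) :=
  calc ∑ n ∈ s, lagWeight K u₀ h T t n ^ 2 ≤ ∑ n ∈ s, K 0 * lagWeight K u₀ h T t n :=
        sum_le_sum fun n _ => by rw [sq]; exact mul_le_mul_of_nonneg_right (hKle _) (hK0 _)
    _ ≤ K 0 * (K 0 * (4 * T * h + 2)) := by
        rw [← mul_sum]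
        exact mul_le_mul_of_nonneg_left (sum_lagWeight_le hK0 hKle hKsupp hh hT s t) (hK0 0)

theorem sum_sum_lagWeight_mul_le (hK0 : ∀ x, 0 ≤ K x) (hKle : ∀ x, K x ≤ K 0)
    (hKsupp : ∀ x, 1 < |x| → K x = 0) (hh : 0 < h) (hT : 0 < T) (s : Finset ℕ) (t ρ : ℕ) :
    ∑ n ∈ s, ∑ n' ∈ s.filter (fun n' => n' ≠ n ∧ |(n' : ℝ) - n| ≤ ρ),
        lagWeight K u₀ h T t n * lagWeight K u₀ h T t n'
      ≤ 2 * ρ * K 0 * (K 0 * (4 * T * h + 2)) :=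
  calc _ ≤ ∑ n ∈ s, 2 * ρ * K 0 * lagWeight K u₀ h T t n := by
        refine sum_le_sum fun n _ => ?_
        calc _ ≤ #(s.filter (fun n' => n' ≠ n ∧ |(n' : ℝ) - n| ≤ ρ)) •
                (lagWeight K u₀ h T t n * K 0) :=
              sum_le_card_nsmul _ _ _ fun n' _ => mul_le_mul_of_nonneg_left (hKle _) (hK0 _)
          _ ≤ 2 * ρ * K 0 * lagWeight K u₀ h T t n := by
              rw [nsmul_eq_mul, mul_comm (lagWeight K u₀ h T t n), ← mul_assoc]
              exact mul_le_mul_of_nonneg_right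
                (mul_le_mul_of_nonneg_right (card_filter_ne_abs_sub_le s n ρ) (hK0 0)) (hK0 _)
    _ ≤ 2 * ρ * K 0 * (K 0 * (4 * T * h + 2)) := by
        rw [← mul_sum]
        exact mul_le_mul_of_nonneg_left (sum_lagWeight_le hK0 hKle hKsupp hh hT s t)
          (mul_nonneg (by positivity) (hK0 0))

end lagWeight

theorem eventually_four_mul_mul_add_two_le {mB : ℕ → ℕ} {b : ℕ → ℝ}
    (hTb : Tendsto (fun T : ℕ => (T : ℝ) * b T) atTop atTop)
    (hmBT : Tendsto (fun T : ℕ => (mB T : ℝ) / (T : ℝ)) atTop (nhds 1)) :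
    ∀ᶠ T : ℕ in atTop, 0 < (T : ℝ) ∧ 0 < b T ∧ 4 * T * b T + 2 ≤ 10 * mB T * b T := by
  filter_upwards [hTb.eventually_ge_atTop 2, hmBT.eventually (eventually_ge_nhds one_half_lt_one),
    eventually_gt_atTop 0] with T hTb2 hmB hT
  have hTpos : (0 : ℝ) < T := by exact_mod_cast hT
  have hbpos : 0 < b T := pos_of_mul_pos_right (by linarith) hTpos.le
  have hTmB : (T : ℝ) ≤ 2 * mB T := by linarith [(le_div_iff₀ hTpos).mp hmB]
  exact ⟨hTpos, hbpos, by nlinarith⟩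

theorem statement15_general
    (K : ℝ → ℝ) (hK0 : ∀ x, 0 ≤ K x) (hKsymm : ∀ x, K (-x) = K x)
    (hKsupp : ∀ x, 1 < |x| → K x = 0)
    (hKmono : ∀ x y, 0 ≤ x → x ≤ y → y ≤ 1 → K y ≤ K x)
    (u₀ : ℝ)
    (mA mB ρ : ℕ → ℕ) (b : ℕ → ℝ)
    (hTb : Tendsto (fun T : ℕ => (T : ℝ) * b T) atTop atTop)
    (hmBT : Tendsto (fun T : ℕ => (mB T : ℝ) / (T : ℝ)) atTop (nhds 1)) :
    ∃ Λ : ℝ, 0 < Λ ∧ ∃ T₀ : ℕ, ∀ T, T₀ ≤ T →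
      ∀ a₁ b₁ : ℕ, 1 ≤ a₁ → a₁ + mA T ≤ T + 1 → 1 ≤ b₁ → b₁ + mB T ≤ T + 1 →
        ((∑ t ∈ Finset.Ico a₁ (a₁ + mA T),
            ∑ t' ∈ Finset.Ico b₁ (b₁ + mB T),
            ∑ t'' ∈ (Finset.Ico b₁ (b₁ + mB T)).filter
                (fun t'' => t'' ≠ t' ∧ |(t'' : ℝ) - (t' : ℝ)| ≤ (ρ T : ℝ)),
              K ((|(t : ℝ) - (t' : ℝ)| / (T : ℝ) - u₀) / b T) *
                K ((|(t : ℝ) - (t'' : ℝ)| / (T : ℝ) - u₀) / b T))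
          ≤ Λ * (mA T : ℝ) * (mB T : ℝ) * (ρ T : ℝ) * b T) ∧
        ((∑ t ∈ Finset.Ico a₁ (a₁ + mA T),
            ∑ t' ∈ Finset.Ico b₁ (b₁ + mB T),
              (K ((|(t : ℝ) - (t' : ℝ)| / (T : ℝ) - u₀) / b T)) ^ 2)
          ≤ Λ * (mA T : ℝ) * (mB T : ℝ) * b T) := by
  have hKle := le_apply_zero_of_symm_of_antitoneOn (hK0 0) hKsymm hKsupp hKmono
  have hKzero := hK0 0
  obtain ⟨T₀, hT₀⟩ := eventually_atTop.mp (eventually_four_mul_mul_add_two_le hTb hmBT)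
  refine ⟨20 * K 0 ^ 2 + 1, by positivity, T₀, fun T hT a₁ b₁ _ _ _ _ => ?_⟩
  obtain ⟨hTpos, hbT, hkey⟩ := hT₀ T hT
  have hcardA : #(Ico a₁ (a₁ + mA T)) = mA T := by simp
  constructor
  · calc _ ≤ #(Ico a₁ (a₁ + mA T)) • (2 * ρ T * K 0 * (K 0 * (4 * T * b T + 2))) :=
          sum_le_card_nsmul _ _ _ fun t _ =>
            sum_sum_lagWeight_mul_le hK0 hKle hKsupp hbT hTpos _ t (ρ T)
      _ ≤ mA T * (2 * ρ T * K 0 * (K 0 * (10 * mB T * b T))) := by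
          rw [hcardA, nsmul_eq_mul]; gcongr
      _ = 20 * K 0 ^ 2 * mA T * mB T * ρ T * b T := by ring
      _ ≤ _ := by gcongr; linarith
  · calc _ ≤ #(Ico a₁ (a₁ + mA T)) • (K 0 * (K 0 * (4 * T * b T + 2))) :=
          sum_le_card_nsmul _ _ _ fun t _ => sum_sq_lagWeight_le hK0 hKle hKsupp hbT hTpos _ t
      _ ≤ mA T * (K 0 * (K 0 * (10 * mB T * b T))) := by
          rw [hcardA, nsmul_eq_mul]; gcongr
      _ = 10 * K 0 ^ 2 * mA T * mB T * b T := by ring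
      _ ≤ _ := by gcongr; linarith [sq_nonneg (K 0)]

/-- Lemma 4 of the paper: kernel double-sum bounds when the
`B` block nearly fills `{1, …, T}` (`m_B/T → 1`) and `m_A/T → 0`. -/
theorem statement15
    (K : ℝ → ℝ) (hK0 : ∀ x, 0 ≤ K x) (hKsymm : ∀ x, K (-x) = K x)
    (hKsupp : ∀ x, 1 < |x| → K x = 0)
    (hKmono : ∀ x y, 0 ≤ x → x ≤ y → y ≤ 1 → K y ≤ K x)
    (u₀ : ℝ) (hu₀ : u₀ ∈ Set.Ioo (0 : ℝ) 1)
    (mA mB ρ : ℕ → ℕ) (b : ℕ → ℝ)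
    (hmApos : ∀ T, 0 < mA T) (hρpos : ∀ T, 0 < ρ T)
    (hAB : ∀ T, mA T ≤ mB T) (hρA : ∀ T, ρ T ≤ mA T)
    (hbpos : ∀ T, 0 < b T)
    (hmA : Tendsto (fun T : ℕ => (mA T : ℝ)) atTop atTop)
    (hρ : Tendsto (fun T : ℕ => (ρ T : ℝ)) atTop atTop)
    (hρmA : Tendsto (fun T : ℕ => (ρ T : ℝ) / (mA T : ℝ)) atTop (nhds 0))
    (hb0 : Tendsto b atTop (nhds 0))
    (hTb : Tendsto (fun T : ℕ => (T : ℝ) * b T) atTop atTop)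
    (hmBT : Tendsto (fun T : ℕ => (mB T : ℝ) / (T : ℝ)) atTop (nhds 1))
    (hmAT : Tendsto (fun T : ℕ => (mA T : ℝ) / (T : ℝ)) atTop (nhds 0)) :
    ∃ Λ : ℝ, 0 < Λ ∧ ∃ T₀ : ℕ, ∀ T, T₀ ≤ T →
      ∀ a₁ b₁ : ℕ, 1 ≤ a₁ → a₁ + mA T ≤ T + 1 → 1 ≤ b₁ → b₁ + mB T ≤ T + 1 →
        ((∑ t ∈ Finset.Ico a₁ (a₁ + mA T),
            ∑ t' ∈ Finset.Ico b₁ (b₁ + mB T),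
            ∑ t'' ∈ (Finset.Ico b₁ (b₁ + mB T)).filter
                (fun t'' => t'' ≠ t' ∧ |(t'' : ℝ) - (t' : ℝ)| ≤ (ρ T : ℝ)),
              K ((|(t : ℝ) - (t' : ℝ)| / (T : ℝ) - u₀) / b T) *
                K ((|(t : ℝ) - (t'' : ℝ)| / (T : ℝ) - u₀) / b T))
          ≤ Λ * (mA T : ℝ) * (mB T : ℝ) * (ρ T : ℝ) * b T) ∧
        ((∑ t ∈ Finset.Ico a₁ (a₁ + mA T),
            ∑ t' ∈ Finset.Ico b₁ (b₁ + mB T),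
              (K ((|(t : ℝ) - (t' : ℝ)| / (T : ℝ) - u₀) / b T)) ^ 2)
          ≤ Λ * (mA T : ℝ) * (mB T : ℝ) * b T) :=
  statement15_general K hK0 hKsymm hKsupp hKmono u₀ mA mB ρ b hTb hmBT

end
end
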